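/- arXiv:math/0501428 — 8 statements merged into one kernel-verified Lean document; each statement's English description precedes it below -/
import Mathlib

section
/- Let U ⊆ ℂ be a nonempty open connected set, let v : ℂ → ℂ be differentiable on U, let E ∈ ℂ, and let Ξ : ℂ → ℂ be three times differentiable on U with Ξ'''(x) − 4(v(x) − E)·Ξ'(x) − 2v'(x)·Ξ(x) = 0 for all x ∈ U. Then the function Q(x) := Ξ(x)²·(E − v(x)) + (1/2)·Ξ(x)·Ξ''(x) − (1/4)·Ξ'(x)² is constant on U. -/
/-!
Differentiating `Q = Ξ²(E - v) + ½ Ξ Ξ'' - ¼ Ξ'²` gives `Q' = ½ Ξ (Ξ''' - 4(v - E)Ξ' - 2v'Ξ)`,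
which vanishes on `U` by the equation; a function with zero derivative on an open connected
set is constant.
-/

section QuadraticInvariant

variable {𝕜 : Type*} [RCLike 𝕜]

/-- Eq. (3.12) of the paper. -/
noncomputable def quadraticInvariant (v : 𝕜 → 𝕜) (E : 𝕜) (Ξ : 𝕜 → 𝕜) (x : 𝕜) : 𝕜 :=
  Ξ x ^ 2 * (E - v x) + (1/2) * Ξ x * deriv (deriv Ξ) x - (1/4) * (deriv Ξ x) ^ 2

theorem hasDerivAt_quadraticInvariant {v Ξ : 𝕜 → 𝕜} (E : 𝕜) {x : 𝕜}
    (hv : DifferentiableAt 𝕜 v x) (hΞ : DifferentiableAt 𝕜 Ξ x)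
    (hΞ' : DifferentiableAt 𝕜 (deriv Ξ) x) (hΞ'' : DifferentiableAt 𝕜 (deriv (deriv Ξ)) x) :
    HasDerivAt (quadraticInvariant v E Ξ)
      ((1/2) * Ξ x * (deriv (deriv (deriv Ξ)) x - 4 * (v x - E) * deriv Ξ x
        - 2 * deriv v x * Ξ x)) x := by
  refine HasDerivAt.congr_deriv ((((hΞ.hasDerivAt.pow 2).mul
    ((hasDerivAt_const x E).sub hv.hasDerivAt)).add
    ((hΞ.hasDerivAt.const_mul (1/2 : 𝕜)).mul hΞ''.hasDerivAt)).sub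
    ((hΞ'.hasDerivAt.pow 2).const_mul (1/4 : 𝕜))) ?_
  simp only [Pi.sub_apply, Pi.pow_apply, Nat.cast_ofNat]
  ring

end QuadraticInvariant

/-- If `Ξ` solves the third-order equation `Ξ''' - 4(v - E) Ξ' - 2 v' Ξ = 0` on a nonempty
open connected set `U ⊆ ℂ`, then `Q = Ξ²(E - v) + (1/2) Ξ Ξ'' - (1/4) (Ξ')²` is constant
on `U`. -/
theorem Q_is_constant
    (U : Set ℂ) (hU : IsOpen U) (hUc : IsConnected U)
    (v : ℂ → ℂ) (E : ℂ)
    (hv : ∀ x ∈ U, DifferentiableAt ℂ v x)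
    (Ξ : ℂ → ℂ)
    (hΞ : ∀ x ∈ U, DifferentiableAt ℂ Ξ x)
    (hΞ' : ∀ x ∈ U, DifferentiableAt ℂ (deriv Ξ) x)
    (hΞ'' : ∀ x ∈ U, DifferentiableAt ℂ (deriv (deriv Ξ)) x)
    (hode : ∀ x ∈ U, deriv (deriv (deriv Ξ)) x - 4 * (v x - E) * deriv Ξ x
      - 2 * deriv v x * Ξ x = 0) :
    ∀ x ∈ U, ∀ y ∈ U,
      Ξ x ^ 2 * (E - v x) + (1/2) * Ξ x * deriv (deriv Ξ) x - (1/4) * (deriv Ξ x) ^ 2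
      = Ξ y ^ 2 * (E - v y) + (1/2) * Ξ y * deriv (deriv Ξ) y - (1/4) * (deriv Ξ y) ^ 2 := by
  have hQ : ∀ x ∈ U, HasDerivAt (quadraticInvariant v E Ξ) 0 x := fun x hx => by
    simpa [hode x hx] using
      hasDerivAt_quadraticInvariant E (hv x hx) (hΞ x hx) (hΞ' x hx) (hΞ'' x hx)
  intro x hx y hy
  exact hU.is_const_of_deriv_eq_zero hUc.isPreconnected
    (fun z hz => (hQ z hz).differentiableAt.differentiableWithinAt)
    (fun z hz => (hQ z hz).deriv) hx hy
end

section
/- Let U ⊆ ℂ be an open set, let v : ℂ → ℂ be a function on U, let E ∈ ℂ, let Ξ : ℂ → ℂ be twice differentiable and nonvanishing on U, and let q ∈ ℂ be such that Ξ(x)²·(E − v(x)) + (1/2)·Ξ(x)·Ξ''(x) − (1/4)·Ξ'(x)² = −q² for all x ∈ U. Let Λ : ℂ → ℂ be differentiable and nonvanishing on U with Λ'(x)·Ξ(x) = Λ(x)·((1/2)·Ξ'(x) + q) for all x ∈ U. Then Λ is twice differentiable on U and Λ''(x) = (v(x) − E)·Λ(x) for all x ∈ U. -/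
open Filter Topology

/-! The equation `Λ' Ξ = Λ (Ξ'/2 + q)` says that `Λ` has logarithmic derivative `a = (Ξ'/2 + q)/Ξ`,
and then `Λ'' = (a' + a²) Λ`. The Riccati combination `a' + a²` equals
`(Ξ Ξ''/2 - Ξ'²/4 + q²)/Ξ²`, which the hypothesis on `q²` identifies with `v - E`. -/
section

variable {𝕜 : Type*} [NontriviallyNormedField 𝕜]

theorem hasDerivAt_deriv_of_deriv_eventuallyEq_mul {f a : 𝕜 → 𝕜} {x : 𝕜}
    (hf : DifferentiableAt 𝕜 f x) (ha : DifferentiableAt 𝕜 a x)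
    (h : deriv f =ᶠ[𝓝 x] fun y => f y * a y) :
    HasDerivAt (deriv f) (f x * (deriv a x + a x ^ 2)) x := by
  have hfx : deriv f x = f x * a x := h.eq_of_nhds
  refine ((hf.hasDerivAt.mul ha.hasDerivAt).congr_of_eventuallyEq h).congr_deriv ?_
  rw [hfx]
  ring

theorem deriv_add_sq_half_deriv_add_const_div [CharZero 𝕜] {Ξ : 𝕜 → 𝕜} {q x : 𝕜}
    (hΞ : DifferentiableAt 𝕜 Ξ x) (hΞ' : DifferentiableAt 𝕜 (deriv Ξ) x) (hΞ0 : Ξ x ≠ 0) :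
    deriv (fun y => ((1/2) * deriv Ξ y + q) / Ξ y) x + (((1/2) * deriv Ξ x + q) / Ξ x) ^ 2
      = ((1/2) * Ξ x * deriv (deriv Ξ) x - (1/4) * deriv Ξ x ^ 2 + q ^ 2) / Ξ x ^ 2 := by
  have hnum : HasDerivAt (fun y => (1/2) * deriv Ξ y + q) ((1/2) * deriv (deriv Ξ) x) x :=
    (hΞ'.hasDerivAt.const_mul _).add_const q
  rw [(hnum.fun_div hΞ.hasDerivAt hΞ0).deriv]
  field_simp
  ring

end

theorem integral_representation_solves_equation_general
    (U : Set ℂ) (hU : IsOpen U) (v : ℂ → ℂ) (E q : ℂ) (Ξ Λ : ℂ → ℂ)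
    (hΞ : ∀ x ∈ U, DifferentiableAt ℂ Ξ x)
    (hΞ' : ∀ x ∈ U, DifferentiableAt ℂ (deriv Ξ) x)
    (hΞ0 : ∀ x ∈ U, Ξ x ≠ 0)
    (hQ : ∀ x ∈ U, Ξ x ^ 2 * (E - v x) + (1/2) * Ξ x * deriv (deriv Ξ) x
      - (1/4) * (deriv Ξ x) ^ 2 = -q ^ 2)
    (hΛ : ∀ x ∈ U, DifferentiableAt ℂ Λ x)
    (hrel : ∀ x ∈ U, deriv Λ x * Ξ x = Λ x * ((1/2) * deriv Ξ x + q)) :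
    (∀ x ∈ U, DifferentiableAt ℂ (deriv Λ) x) ∧
    (∀ x ∈ U, deriv (deriv Λ) x = (v x - E) * Λ x) := by
  set a : ℂ → ℂ := fun y => ((1/2) * deriv Ξ y + q) / Ξ y
  have hΛ'' : ∀ x ∈ U, HasDerivAt (deriv Λ) (Λ x * (deriv a x + a x ^ 2)) x := by
    intro x hx
    have hlog : deriv Λ =ᶠ[𝓝 x] fun y => Λ y * a y := by
      filter_upwards [hU.mem_nhds hx] with y hy
      rw [mul_div_assoc', eq_div_iff (hΞ0 y hy)]
      exact hrel y hy
    have ha : DifferentiableAt ℂ a x :=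
      (((hΞ' x hx).const_mul _).add_const q).div (hΞ x hx) (hΞ0 x hx)
    exact hasDerivAt_deriv_of_deriv_eventuallyEq_mul (hΛ x hx) ha hlog
  have hriccati : ∀ x ∈ U, deriv a x + a x ^ 2 = v x - E := by
    intro x hx
    rw [deriv_add_sq_half_deriv_add_const_div (hΞ x hx) (hΞ' x hx) (hΞ0 x hx),
      div_eq_iff (pow_ne_zero 2 (hΞ0 x hx))]
    linear_combination hQ x hx
  refine ⟨fun x hx => (hΛ'' x hx).differentiableAt, fun x hx => ?_⟩
  rw [(hΛ'' x hx).deriv, hriccati x hx, mul_comm]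

/-- The integral-representation function `Λ` (characterized by `Λ' Ξ = Λ ((1/2) Ξ' + q)`
with `Q = -q²`) solves the Schrödinger-type equation `Λ'' = (v - E) Λ` on `U`. -/
theorem integral_representation_solves_equation
    (U : Set ℂ) (hU : IsOpen U) (v : ℂ → ℂ) (E q : ℂ) (Ξ Λ : ℂ → ℂ)
    (hΞ : ∀ x ∈ U, DifferentiableAt ℂ Ξ x)
    (hΞ' : ∀ x ∈ U, DifferentiableAt ℂ (deriv Ξ) x)
    (hΞ0 : ∀ x ∈ U, Ξ x ≠ 0)
    (hQ : ∀ x ∈ U, Ξ x ^ 2 * (E - v x) + (1/2) * Ξ x * deriv (deriv Ξ) x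
      - (1/4) * (deriv Ξ x) ^ 2 = -q ^ 2)
    (hΛ : ∀ x ∈ U, DifferentiableAt ℂ Λ x)
    (hΛ0 : ∀ x ∈ U, Λ x ≠ 0)
    (hrel : ∀ x ∈ U, deriv Λ x * Ξ x = Λ x * ((1/2) * deriv Ξ x + q)) :
    (∀ x ∈ U, DifferentiableAt ℂ (deriv Λ) x) ∧
    (∀ x ∈ U, deriv (deriv Λ) x = (v x - E) * Λ x) :=
  integral_representation_solves_equation_general U hU v E q Ξ Λ hΞ hΞ' hΞ0 hQ hΛ hrel
end

section
/- Let U ⊆ ℂ be a nonempty open set with −U = U, let Ξ : ℂ → ℂ be differentiable on U, nonvanishing on U, and even (Ξ(−x) = Ξ(x) for x ∈ U), let q ∈ ℂ with q ≠ 0, and let Λ : ℂ → ℂ be differentiable and nonvanishing on U with Λ'(x)·Ξ(x) = Λ(x)·((1/2)·Ξ'(x) + q) for all x ∈ U. Then, writing Λ̃(x) := Λ(−x): (i) Λ̃(x)·Λ'(x) − Λ(x)·Λ̃'(x) = 2q·Λ(x)·Λ̃(x)/Ξ(x) for all x ∈ U; and (ii) for all c₁, c₂ ∈ ℂ, if c₁·Λ(x)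 + c₂·Λ(−x) = 0 for all x ∈ U, then c₁ = 0 and c₂ = 0. -/
/-- Wronskian identity `Λ(-x) Λ'(x) - Λ(x) (Λ(-·))'(x) = 2q Λ(x) Λ(-x) / Ξ(x)` and the
linear independence of `Λ(x)` and `Λ(-x)` when `q ≠ 0`. -/
theorem wronskian_identity_and_linear_independence
    (U : Set ℂ) (hU : IsOpen U) (hne : U.Nonempty) (hsym : -U = U)
    (Ξ Λ : ℂ → ℂ) (q : ℂ) (hq : q ≠ 0)
    (hΞ : ∀ x ∈ U, DifferentiableAt ℂ Ξ x)
    (hΞ0 : ∀ x ∈ U, Ξ x ≠ 0)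
    (hΞeven : ∀ x ∈ U, Ξ (-x) = Ξ x)
    (hΛ : ∀ x ∈ U, DifferentiableAt ℂ Λ x)
    (hΛ0 : ∀ x ∈ U, Λ x ≠ 0)
    (hrel : ∀ x ∈ U, deriv Λ x * Ξ x = Λ x * ((1/2) * deriv Ξ x + q)) :
    (∀ x ∈ U, Λ (-x) * deriv Λ x - Λ x * deriv (fun y => Λ (-y)) x
      = 2 * q * Λ x * Λ (-x) / Ξ x) ∧
    (∀ c₁ c₂ : ℂ, (∀ x ∈ U, c₁ * Λ x + c₂ * Λ (-x) = 0) → c₁ = 0 ∧ c₂ = 0) := by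
  have hnegU : ∀ x ∈ U, -x ∈ U := by
    intro x hx
    have : -x ∈ -U := Set.neg_mem_neg.mpr hx
    rwa [hsym] at this
  have key : ∀ x ∈ U, Λ (-x) * deriv Λ x - Λ x * deriv (fun y => Λ (-y)) x
      = 2 * q * Λ x * Λ (-x) / Ξ x := by
    intro x hx
    have hxn := hnegU x hx
    have hΞx := hΞ0 x hx
    -- deriv of Ξ at -x
    have hΞd : deriv Ξ (-x) = - deriv Ξ x := by
      have hev : (fun y => Ξ (-y)) =ᶠ[nhds x] Ξ := by
        filter_upwards [hU.mem_nhds hx] with y hy using hΞeven y hy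
      have h1 : deriv (fun y => Ξ (-y)) x = deriv Ξ x := hev.deriv_eq
      rw [deriv_comp_neg] at h1
      linear_combination -h1
    have h1 := hrel x hx
    have h2 := hrel (-x) hxn
    rw [hΞeven x hx, hΞd] at h2
    rw [deriv_comp_neg, eq_div_iff hΞx]
    linear_combination Λ (-x) * h1 + Λ x * h2
  refine ⟨key, ?_⟩
  intro c₁ c₂ hlin
  obtain ⟨x, hx⟩ := hne
  have hxn := hnegU x hx
  have hΞx := hΞ0 x hx
  have E1 := hlin x hx
  have E2 : c₁ * deriv Λ x + c₂ * (deriv Λ (-x) * -1) = 0 := by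
    have hd : HasDerivAt (fun y => c₁ * Λ y + c₂ * Λ (-y))
        (c₁ * deriv Λ x + c₂ * (deriv Λ (-x) * -1)) x := by
      exact (((hΛ x hx).hasDerivAt.const_mul c₁).add
        ((((hΛ (-x) hxn).hasDerivAt.comp x (hasDerivAt_neg x))).const_mul c₂))
    have hev : (fun y => c₁ * Λ y + c₂ * Λ (-y)) =ᶠ[nhds x] (fun _ => (0:ℂ)) := by
      filter_upwards [hU.mem_nhds hx] with y hy using hlin y hy
    have := hd.deriv
    rw [hev.deriv_eq, deriv_const] at this
    exact this.symm
  have hW := key x hx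
  rw [deriv_comp_neg] at hW
  have hWne : Λ (-x) * deriv Λ x - Λ x * -deriv Λ (-x) ≠ 0 := by
    rw [hW]
    exact div_ne_zero (by
      exact mul_ne_zero (mul_ne_zero (mul_ne_zero two_ne_zero hq) (hΛ0 x hx)) (hΛ0 (-x) hxn)) hΞx
  have hc1 : c₁ * (Λ (-x) * deriv Λ x - Λ x * -deriv Λ (-x)) = 0 := by
    linear_combination deriv Λ (-x) * E1 + Λ (-x) * E2
  have hc1' : c₁ = 0 := by
    rcases mul_eq_zero.mp hc1 with h | h
    · exact h
    · exact absurd h hWne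
  refine ⟨hc1', ?_⟩
  rw [hc1'] at E1
  simp only [zero_mul, zero_add] at E1
  rcases mul_eq_zero.mp E1 with h | h
  · exact h
  · exact absurd h (hΛ0 (-x) hxn)
end

section
/- Let U ⊆ ℂ be a nonempty open connected set and p ∈ ℂ with U + p = U. Let Ξ : ℂ → ℂ be analytic on U, nonvanishing on U, with Ξ(x + p) = Ξ(x) for all x ∈ U, and let Λ : ℂ → ℂ be analytic on U, nonvanishing on U, with Λ'(x)·Ξ(x) = (1/2)·Λ(x)·Ξ'(x) for all x ∈ U. Then there exists ε ∈ {1, −1} such that Λ(x + p) = ε·Λ(x) for all x ∈ U. -/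
/-!
The relation `Λ' Ξ = ½ Λ Ξ'` says exactly that `Λ² / Ξ` has zero derivative, so `Λ² = c Ξ` on
the connected set `U`. Periodicity of `Ξ` then gives `Λ(x + p)² = Λ(x)²`, so the continuous
ratio `Λ(x + p) / Λ(x)` takes values in the discrete set `{1, -1}` and is therefore constant.
-/

open Set

theorem deriv_sq_div_eq_zero {𝕜 : Type*} [NontriviallyNormedField 𝕜] {f g : 𝕜 → 𝕜} {x : 𝕜}
    (hf : DifferentiableAt 𝕜 f x) (hg : DifferentiableAt 𝕜 g x) (hg0 : g x ≠ 0)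
    (hrel : 2 * deriv f x * g x = f x * deriv g x) :
    deriv (fun y => f y ^ 2 / g y) x = 0 := by
  rw [((hf.hasDerivAt.fun_pow 2).fun_div hg.hasDerivAt hg0).deriv]
  refine div_eq_zero_iff.2 (Or.inl ?_)
  simp only [Nat.cast_ofNat, Nat.add_one_sub_one, pow_one]
  linear_combination f x * hrel

theorem IsPreconnected.exists_sign_of_sq_eq_sq {X 𝕜 : Type*} [TopologicalSpace X]
    [NormedField 𝕜] {S : Set X} (hS : IsPreconnected S) {f g : X → 𝕜}
    (hf : ContinuousOn f S) (hg : ContinuousOn g S) (hg0 : ∀ x ∈ S, g x ≠ 0)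
    (hsq : ∀ x ∈ S, f x ^ 2 = g x ^ 2) :
    ∃ ε : 𝕜, (ε = 1 ∨ ε = -1) ∧ ∀ x ∈ S, f x = ε * g x := by
  rcases S.eq_empty_or_nonempty with rfl | ⟨x₀, hx₀⟩
  · exact ⟨1, Or.inl rfl, fun _ h => h.elim⟩
  have hratio : MapsTo (f / g) S {1, -1} := fun x hx => by
    rw [mem_insert_iff, mem_singleton_iff, ← sq_eq_one_iff, Pi.div_apply, div_pow, hsq x hx,
      div_self (pow_ne_zero 2 (hg0 x hx))]
  refine ⟨f x₀ / g x₀, hratio hx₀, fun x hx => ?_⟩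
  have h := hS.constant_of_mapsTo (toFinite _).isDiscrete (hf.div hg hg0) hratio hx₀ hx
  rw [Pi.div_apply, Pi.div_apply] at h
  rw [h, div_mul_cancel₀ _ (hg0 x hx)]

theorem multiplier_pm_one_when_Q_zero_general
    (U : Set ℂ) (hU : IsOpen U) (hconn : IsConnected U)
    (p : ℂ) (hUp : (· + p) '' U = U)
    (Ξ Λ : ℂ → ℂ)
    (hΞ : AnalyticOnNhd ℂ Ξ U) (hΞ0 : ∀ x ∈ U, Ξ x ≠ 0)
    (hΞp : ∀ x ∈ U, Ξ (x + p) = Ξ x)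
    (hΛ : AnalyticOnNhd ℂ Λ U) (hΛ0 : ∀ x ∈ U, Λ x ≠ 0)
    (hrel : ∀ x ∈ U, deriv Λ x * Ξ x = (1/2) * Λ x * deriv Ξ x) :
    ∃ ε : ℂ, (ε = 1 ∨ ε = -1) ∧ ∀ x ∈ U, Λ (x + p) = ε * Λ x := by
  have hshift : MapsTo (· + p) U U := fun x hx => hUp ▸ mem_image_of_mem _ hx
  have hconst : ∀ x ∈ U, ∀ y ∈ U, Λ x ^ 2 / Ξ x = Λ y ^ 2 / Ξ y := fun x hx y hy =>
    hU.is_const_of_deriv_eq_zero hconn.isPreconnected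
      ((hΛ.differentiableOn.pow 2).div hΞ.differentiableOn hΞ0)
      (fun z hz => deriv_sq_div_eq_zero (hΛ z hz).differentiableAt (hΞ z hz).differentiableAt
        (hΞ0 z hz) (by linear_combination 2 * hrel z hz)) hx hy
  have hsq : ∀ x ∈ U, Λ (x + p) ^ 2 = Λ x ^ 2 := fun x hx => by
    have h := hconst _ (hshift hx) x hx
    rwa [hΞp x hx, div_left_inj' (hΞ0 x hx)] at h
  exact hconn.isPreconnected.exists_sign_of_sq_eq_sq
    (hΛ.continuousOn.comp (continuousOn_id.add continuousOn_const) hshift)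
    hΛ.continuousOn hΛ0 hsq

/-- If `Q = 0` (i.e. `Λ' Ξ = (1/2) Λ Ξ'`) and `Ξ` is `p`-periodic, then `Λ` has multiplier
`±1` under the translation by the period `p`. -/
theorem multiplier_pm_one_when_Q_zero
    (U : Set ℂ) (hU : IsOpen U) (hne : U.Nonempty) (hconn : IsConnected U)
    (p : ℂ) (hUp : (· + p) '' U = U)
    (Ξ Λ : ℂ → ℂ)
    (hΞ : AnalyticOnNhd ℂ Ξ U) (hΞ0 : ∀ x ∈ U, Ξ x ≠ 0)
    (hΞp : ∀ x ∈ U, Ξ (x + p) = Ξ x)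
    (hΛ : AnalyticOnNhd ℂ Λ U) (hΛ0 : ∀ x ∈ U, Λ x ≠ 0)
    (hrel : ∀ x ∈ U, deriv Λ x * Ξ x = (1/2) * Λ x * deriv Ξ x) :
    ∃ ε : ℂ, (ε = 1 ∨ ε = -1) ∧ ∀ x ∈ U, Λ (x + p) = ε * Λ x :=
  multiplier_pm_one_when_Q_zero_general U hU hconn p hUp Ξ Λ hΞ hΞ0 hΞp hΛ hΛ0 hrel
end

section
/- Let U ⊆ ℂ be an open set and p ∈ ℂ with U + p = U. Let g₁, g₂ : ℂ → ℂ be differentiable on U, and let ε₁, ε₂ ∈ {1, −1} with ε₁·ε₂ = −1 be such that g₁(x + p) = ε₁·g₁(x) and g₂(x + p) = ε₂·g₂(x) for all x ∈ U. Let C ∈ ℂ and let h : ℂ → ℂ satisfy h(x + p) = h(x) for all x ∈ U, h(x₀) ≠ 0 for some x₀ ∈ U, and g₂(x)·g₁'(x) − g₁(x)·g₂'(x) = C·h(x) for all x ∈ U. Then C = 0. -/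
lemma deriv_shift_mul (U : Set ℂ) (hU : IsOpen U) (p ε : ℂ) (g : ℂ → ℂ)
    (hg : ∀ x ∈ U, DifferentiableAt ℂ g x)
    (hper : ∀ x ∈ U, g (x + p) = ε * g x) (x : ℂ) (hx : x ∈ U) :
    deriv g (x + p) = ε * deriv g x := by
  have hev : (fun y => g (y + p)) =ᶠ[nhds x] (fun y => ε * g y) :=
    Filter.eventuallyEq_of_mem (hU.mem_nhds hx) hper
  have h1 : deriv (fun y => g (y + p)) x = deriv (fun y => ε * g y) x := hev.deriv_eq
  rw [deriv_comp_add_const, deriv_const_mul ε (hg x hx)] at h1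
  exact h1

/-- If two functions have opposite multipliers `ε₁ ε₂ = -1` under the period `p` and their
Wronskian equals `C h` with `h` `p`-periodic and not identically zero, then `C = 0`. -/
theorem wronskian_constant_vanishes
    (U : Set ℂ) (hU : IsOpen U) (p : ℂ) (hUp : (· + p) '' U = U)
    (g₁ g₂ : ℂ → ℂ)
    (hg₁ : ∀ x ∈ U, DifferentiableAt ℂ g₁ x)
    (hg₂ : ∀ x ∈ U, DifferentiableAt ℂ g₂ x)
    (ε₁ ε₂ : ℂ) (hε₁ : ε₁ = 1 ∨ ε₁ = -1) (hε₂ : ε₂ = 1 ∨ ε₂ = -1)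
    (hεε : ε₁ * ε₂ = -1)
    (hper₁ : ∀ x ∈ U, g₁ (x + p) = ε₁ * g₁ x)
    (hper₂ : ∀ x ∈ U, g₂ (x + p) = ε₂ * g₂ x)
    (C : ℂ) (h : ℂ → ℂ)
    (hh : ∀ x ∈ U, h (x + p) = h x)
    (x₀ : ℂ) (hx₀ : x₀ ∈ U) (hh0 : h x₀ ≠ 0)
    (hW : ∀ x ∈ U, g₂ x * deriv g₁ x - g₁ x * deriv g₂ x = C * h x) :
    C = 0 := by
  have hxp : x₀ + p ∈ U := by
    rw [← hUp]; exact ⟨x₀, hx₀, rfl⟩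
  have hW' := hW (x₀ + p) hxp
  rw [hper₁ x₀ hx₀, hper₂ x₀ hx₀, deriv_shift_mul U hU p ε₁ g₁ hg₁ hper₁ x₀ hx₀,
    deriv_shift_mul U hU p ε₂ g₂ hg₂ hper₂ x₀ hx₀, hh x₀ hx₀] at hW'
  have hW0 := hW x₀ hx₀
  have key : (ε₁ * ε₂) * (C * h x₀) = C * h x₀ := by
    linear_combination hW' - (ε₁ * ε₂) * hW0
  rw [hεε] at key
  have hC : C * h x₀ = 0 := by linear_combination -key / 2
  exact (mul_eq_zero.mp hC).resolve_right hh0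
end

section
/- Let q ∈ ℂ, t ∈ ℂ, and let W ⊆ ℂ be an open set with −W = W containing t and −t. Let Ξ, Λ : ℂ → ℂ be differentiable on W with Ξ even on W (Ξ(−x) = Ξ(x) for x ∈ W), Ξ(−t) = 0, Λ(−t) ≠ 0, and Λ'(x)·Ξ(x) = Λ(x)·((1/2)·Ξ'(x) + q) for all x ∈ W. Then Ξ'(t) = 2q. Moreover, if in addition P : ℂ → ℂ is differentiable at t with P'(t) ≠ 0 and X : ℂ → ℂ is differentiable at P(t) with Ξ(x) = X(P(x)) on a neighborhood of t, then X'(P(t)) = 2q/P'(t). -/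
/-- At a zero `-t` of the even function `Ξ` where `Λ(-t) ≠ 0`, the relation
`Λ' Ξ = Λ ((1/2) Ξ' + q)` forces `Ξ'(t) = 2q`; in the variable `z = P(x)` with
`Ξ = X ∘ P` near `t`, this reads `X'(P(t)) = 2q / P'(t)`. -/
theorem derivative_of_Xi_at_zero
    (q t : ℂ) (W : Set ℂ) (hW : IsOpen W) (hsym : -W = W)
    (ht : t ∈ W) (hmt : -t ∈ W)
    (Ξ Λ : ℂ → ℂ)
    (hΞ : ∀ x ∈ W, DifferentiableAt ℂ Ξ x)
    (hΛ : ∀ x ∈ W, DifferentiableAt ℂ Λ x)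
    (hΞeven : ∀ x ∈ W, Ξ (-x) = Ξ x)
    (hΞt : Ξ (-t) = 0) (hΛt : Λ (-t) ≠ 0)
    (hrel : ∀ x ∈ W, deriv Λ x * Ξ x = Λ x * ((1/2) * deriv Ξ x + q)) :
    deriv Ξ t = 2 * q ∧
    ∀ P X : ℂ → ℂ, DifferentiableAt ℂ P t → deriv P t ≠ 0 →
      DifferentiableAt ℂ X (P t) → (∀ᶠ x in nhds t, Ξ x = X (P x)) →
      deriv X (P t) = 2 * q / deriv P t := by
  -- derivative at -t
  have h1 := hrel (-t) hmt
  rw [hΞt, mul_zero] at h1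
  have h2 : (1/2 : ℂ) * deriv Ξ (-t) + q = 0 := by
    rcases mul_eq_zero.mp h1.symm with h | h
    · exact absurd h hΛt
    · exact h
  have hdmt : deriv Ξ (-t) = -(2 * q) := by linear_combination 2 * h2
  -- evenness transfers the derivative
  have hev : (fun x => Ξ (-x)) =ᶠ[nhds t] Ξ := by
    filter_upwards [hW.mem_nhds ht] with x hx using hΞeven x hx
  have hmain : deriv Ξ t = 2 * q := by
    rw [← hev.deriv_eq, deriv_comp_neg, hdmt, neg_neg]
  refine ⟨hmain, fun P X hP hP' hX hEq => ?_⟩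
  have hcomp : deriv (X ∘ P) t = deriv X (P t) * deriv P t := deriv_comp t hX hP
  have : deriv Ξ t = deriv X (P t) * deriv P t := by
    rw [Filter.EventuallyEq.deriv_eq hEq, ← hcomp]; rfl
  rw [hmain] at this
  rw [eq_div_iff hP']
  linear_combination this.symm
end

section
/- Let e₁, e₂, e₃ ∈ ℂ with e₁ + e₂ + e₃ = 0, and set g₂ := −4(e₁e₂ + e₂e₃ + e₃e₁) and g₃ := 4e₁e₂e₃. Let b₁ ∈ ℂ with b₁ ≠ e₁, set μ₁ := 1/(2(b₁ − e₁)) and p := −(4b₁³ − g₂b₁ − g₃)·μ₁² + (6b₁² − g₂/2)·μ₁. Let U ⊆ ℂ be open, let P : ℂ → ℂ be twice differentiable on U with P'(x)² = 4(P(x) − e₁)(P(x) − e₂)(P(x) − e₃) and P''(x) = 6P(x)² − g₂/2 on U, and with P(x) ≠ b₁ on U; let w : ℂ → ℂ be twice differentiable and nonvanishing on U with w(x)² = P(x) − e₁ on U. Then −w''(x) + (P'(x)/(P(x) − b₁))·w'(x) − (μ₁·(4b₁³ − g₂b₁ − g₃)/(P(x) − b₁) + p)·w(x) = 0 for all x ∈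 U. -/
/-!
Differentiating `w² = ℘ - e₁` twice gives `2ww' = ℘'` and `2w'² + 2ww'' = ℘''`, and
`℘'² = 4(℘ - e₁)(℘ - e₂)(℘ - e₃)` then forces `w'² = (℘ - e₂)(℘ - e₃)`. Multiplied by `2w`, the
equation therefore becomes a rational identity in the single value `℘(x)`. Its pole at `℘ = b₁`
cancels because `2μ₁(b₁ - e₁) = 1`, and the choice of `p` makes the remaining polynomial vanish.
-/

open Set

section Weierstrass

variable {e₁ e₂ e₃ g₂ g₃ : ℂ}

theorem weierstrass_cubic_eq_mul (hsum : e₁ + e₂ + e₃ = 0)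
    (hg₂ : g₂ = -4 * (e₁ * e₂ + e₂ * e₃ + e₃ * e₁)) (hg₃ : g₃ = 4 * e₁ * e₂ * e₃) (t : ℂ) :
    4 * t ^ 3 - g₂ * t - g₃ = 4 * (t - e₁) * (t - e₂) * (t - e₃) := by
  subst hg₂ hg₃
  linear_combination (4 * t ^ 2) * hsum

theorem co_p_rational_identity (hsum : e₁ + e₂ + e₃ = 0)
    (hg₂ : g₂ = -4 * (e₁ * e₂ + e₂ * e₃ + e₃ * e₁)) (hg₃ : g₃ = 4 * e₁ * e₂ * e₃)
    {b₁ μ₁ p Q : ℂ} (hb : b₁ ≠ e₁) (hμ : μ₁ = 1 / (2 * (b₁ - e₁)))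
    (hp : p = -(4 * b₁ ^ 3 - g₂ * b₁ - g₃) * μ₁ ^ 2 + (6 * b₁ ^ 2 - g₂ / 2) * μ₁)
    (hQ : Q ≠ b₁) :
    -(6 * Q ^ 2 - g₂ / 2) + 2 * (Q - e₂) * (Q - e₃)
      + 4 * (Q - e₁) * (Q - e₂) * (Q - e₃) / (Q - b₁)
      - 2 * (μ₁ * (4 * b₁ ^ 3 - g₂ * b₁ - g₃) / (Q - b₁) + p) * (Q - e₁) = 0 := by
  have he₃ : e₃ = -e₁ - e₂ := by linear_combination hsum
  rw [hp, hμ, weierstrass_cubic_eq_mul hsum hg₂ hg₃, hg₂, he₃]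
  field_simp [sub_ne_zero.mpr hQ, sub_ne_zero.mpr hb]
  ring

theorem co_p_equation_of_relations {b₁ μ₁ p W W₁ W₂ Q P₁ P₂ : ℂ} (hW : W ≠ 0)
    (hWsq : W ^ 2 = Q - e₁) (h₁ : 2 * W * W₁ = P₁) (h₂ : 2 * W₁ ^ 2 + 2 * W * W₂ = P₂)
    (hP₁ : P₁ ^ 2 = 4 * (Q - e₁) * (Q - e₂) * (Q - e₃)) (hP₂ : P₂ = 6 * Q ^ 2 - g₂ / 2)
    (hid : -(6 * Q ^ 2 - g₂ / 2) + 2 * (Q - e₂) * (Q - e₃)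
      + 4 * (Q - e₁) * (Q - e₂) * (Q - e₃) / (Q - b₁)
      - 2 * (μ₁ * (4 * b₁ ^ 3 - g₂ * b₁ - g₃) / (Q - b₁) + p) * (Q - e₁) = 0) :
    -W₂ + (P₁ / (Q - b₁)) * W₁ - (μ₁ * (4 * b₁ ^ 3 - g₂ * b₁ - g₃) / (Q - b₁) + p) * W = 0 := by
  have hW₁sq : W₁ ^ 2 = (Q - e₂) * (Q - e₃) := by
    refine mul_left_cancel₀ (by simp [hW] : (4 : ℂ) * W ^ 2 ≠ 0) ?_
    linear_combination (2 * W * W₁ + P₁) * h₁ + hP₁ - 4 * (Q - e₂) * (Q - e₃) * hWsq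
  refine (mul_eq_zero.mp ?_).resolve_left (mul_ne_zero two_ne_zero hW)
  linear_combination (-1) * h₂ - hP₂ + 2 * hW₁sq + P₁ / (Q - b₁) * h₁ + hP₁ / (Q - b₁)
    - 2 * (μ₁ * (4 * b₁ ^ 3 - g₂ * b₁ - g₃) / (Q - b₁) + p) * hWsq + hid

end Weierstrass

section SquareRoot

variable {𝕜 : Type*} [NontriviallyNormedField 𝕜] {U : Set 𝕜} {w P : 𝕜 → 𝕜} {c x : 𝕜}

theorem deriv_eqOn_two_mul_mul_deriv_of_sq_eqOn (hU : IsOpen U)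
    (hw : ∀ x ∈ U, DifferentiableAt 𝕜 w x) (hwsq : EqOn (fun x => w x ^ 2) (fun x => P x - c) U) :
    EqOn (deriv P) (fun x => 2 * w x * deriv w x) U := by
  intro x hx
  have h := hwsq.deriv hU hx
  rw [deriv_sub_const, deriv_fun_pow (hw x hx)] at h
  simp [← h]

theorem deriv_deriv_eq_of_sq_eqOn (hU : IsOpen U)
    (hw : ∀ x ∈ U, DifferentiableAt 𝕜 w x) (hwsq : EqOn (fun x => w x ^ 2) (fun x => P x - c) U)
    (hx : x ∈ U) (hw' : DifferentiableAt 𝕜 (deriv w) x) :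
    deriv (deriv P) x = 2 * deriv w x ^ 2 + 2 * w x * deriv (deriv w) x := by
  rw [(deriv_eqOn_two_mul_mul_deriv_of_sq_eqOn hU hw hwsq).deriv hU hx,
    deriv_fun_mul ((hw x hx).const_mul 2) hw', deriv_const_mul 2 (hw x hx)]
  ring

end SquareRoot

theorem co_p_function_solves_equation_general
    (e₁ e₂ e₃ : ℂ) (hsum : e₁ + e₂ + e₃ = 0)
    (g₂ g₃ : ℂ) (hg₂ : g₂ = -4 * (e₁ * e₂ + e₂ * e₃ + e₃ * e₁)) (hg₃ : g₃ = 4 * e₁ * e₂ * e₃)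
    (b₁ : ℂ) (hb : b₁ ≠ e₁)
    (μ₁ p : ℂ) (hμ : μ₁ = 1 / (2 * (b₁ - e₁)))
    (hp : p = -(4 * b₁ ^ 3 - g₂ * b₁ - g₃) * μ₁ ^ 2 + (6 * b₁ ^ 2 - g₂ / 2) * μ₁)
    (U : Set ℂ) (hU : IsOpen U)
    (P w : ℂ → ℂ)
    (hPsq : ∀ x ∈ U, (deriv P x) ^ 2 = 4 * (P x - e₁) * (P x - e₂) * (P x - e₃))
    (hPdd : ∀ x ∈ U, deriv (deriv P) x = 6 * (P x) ^ 2 - g₂ / 2)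
    (hPb : ∀ x ∈ U, P x ≠ b₁)
    (hw : ∀ x ∈ U, DifferentiableAt ℂ w x)
    (hw' : ∀ x ∈ U, DifferentiableAt ℂ (deriv w) x)
    (hw0 : ∀ x ∈ U, w x ≠ 0)
    (hwsq : ∀ x ∈ U, (w x) ^ 2 = P x - e₁) :
    ∀ x ∈ U, -deriv (deriv w) x + (deriv P x / (P x - b₁)) * deriv w x
      - (μ₁ * (4 * b₁ ^ 3 - g₂ * b₁ - g₃) / (P x - b₁) + p) * w x = 0 := by
  intro x hx
  exact co_p_equation_of_relations (hw0 x hx) (hwsq x hx)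
    (deriv_eqOn_two_mul_mul_deriv_of_sq_eqOn hU hw hwsq hx).symm
    (deriv_deriv_eq_of_sq_eqOn hU hw hwsq hx (hw' x hx)).symm (hPsq x hx) (hPdd x hx)
    (co_p_rational_identity hsum hg₂ hg₃ hb hμ hp (hPb x hx))

/-- The co-℘ function `w = √(P - e₁)` solves the linear equation
`-w'' + (P'/(P - b₁)) w' - (μ₁ (4b₁³ - g₂b₁ - g₃)/(P - b₁) + p) w = 0`
for `μ₁ = 1/(2(b₁ - e₁))` and `p = -(4b₁³ - g₂b₁ - g₃) μ₁² + (6b₁² - g₂/2) μ₁`. -/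
theorem co_p_function_solves_equation
    (e₁ e₂ e₃ : ℂ) (hsum : e₁ + e₂ + e₃ = 0)
    (g₂ g₃ : ℂ) (hg₂ : g₂ = -4 * (e₁ * e₂ + e₂ * e₃ + e₃ * e₁)) (hg₃ : g₃ = 4 * e₁ * e₂ * e₃)
    (b₁ : ℂ) (hb : b₁ ≠ e₁)
    (μ₁ p : ℂ) (hμ : μ₁ = 1 / (2 * (b₁ - e₁)))
    (hp : p = -(4 * b₁ ^ 3 - g₂ * b₁ - g₃) * μ₁ ^ 2 + (6 * b₁ ^ 2 - g₂ / 2) * μ₁)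
    (U : Set ℂ) (hU : IsOpen U)
    (P w : ℂ → ℂ)
    (hP : ∀ x ∈ U, DifferentiableAt ℂ P x)
    (hP' : ∀ x ∈ U, DifferentiableAt ℂ (deriv P) x)
    (hPsq : ∀ x ∈ U, (deriv P x) ^ 2 = 4 * (P x - e₁) * (P x - e₂) * (P x - e₃))
    (hPdd : ∀ x ∈ U, deriv (deriv P) x = 6 * (P x) ^ 2 - g₂ / 2)
    (hPb : ∀ x ∈ U, P x ≠ b₁)
    (hw : ∀ x ∈ U, DifferentiableAt ℂ w x)
    (hw' : ∀ x ∈ U, DifferentiableAt ℂ (deriv w) x)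
    (hw0 : ∀ x ∈ U, w x ≠ 0)
    (hwsq : ∀ x ∈ U, (w x) ^ 2 = P x - e₁) :
    ∀ x ∈ U, -deriv (deriv w) x + (deriv P x / (P x - b₁)) * deriv w x
      - (μ₁ * (4 * b₁ ^ 3 - g₂ * b₁ - g₃) / (P x - b₁) + p) * w x = 0 :=
  co_p_function_solves_equation_general e₁ e₂ e₃ hsum g₂ g₃ hg₂ hg₃ b₁ hb μ₁ p hμ hp U hU P w hPsq
    hPdd hPb hw hw' hw0 hwsq
end

section
/- Let g₂, g₃ ∈ ℂ and let c ∈ ℂ with c² = g₂/12. Let U ⊆ ℂ be open and let P : ℂ → ℂ be three times differentiable on U with P'(x)² = 4P(x)³ − g₂·P(x) − g₃ and P''(x) = 6P(x)² − g₂/2 on U, and suppose P(x)² ≠ g₂/12 and P''(x) ≠ 0 for all x ∈ U. Then for all x ∈ U: P'(x)/(P(x) + c) + P'(x)/(P(x) − c) = P'''(x)/P''(x). Consequently, both the constant function 1 and the function P' satisfy −f''(x) + (P'(x)/(P(x) + c) + P'(x)/(P(x) − c))·f'(x) = 0 on U. -/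
/-! Differentiating `P'' = 6P² - g₂/2` gives `P''' = 12 P P'`, while
`P'/(P + c) + P'/(P - c) = 2 P P'/(P² - c²)` and `6 (P² - c²) = P''` because `c² = g₂/12`.
So the coefficient is the logarithmic derivative of `P''`, and `-f'' + (P'''/P'') f' = 0`
holds for every `f` with `f' ∈ ℂ P''`, in particular for `1` and `P'`. -/

open Filter Topology

theorem deriv_eq_of_eventuallyEq_const_mul_sq_sub {𝕜 : Type*} [NontriviallyNormedField 𝕜]
    {f g : 𝕜 → 𝕜} {x a b : 𝕜} (hf : f =ᶠ[𝓝 x] fun y => a * g y ^ 2 - b)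
    (hg : DifferentiableAt 𝕜 g x) : deriv f x = 2 * a * g x * deriv g x := by
  rw [hf.deriv_eq, (((hg.hasDerivAt.fun_pow 2).const_mul a).sub_const b).deriv]
  ring

theorem div_add_div_add_sub {K : Type*} [Field K] {p c : K} (q : K) (h : p ^ 2 ≠ c ^ 2) :
    q / (p + c) + q / (p - c) = 2 * p * q / (p ^ 2 - c ^ 2) := by
  have hsub : p ^ 2 - c ^ 2 ≠ 0 := sub_ne_zero.mpr h
  have hplus : p + c ≠ 0 := fun h0 => hsub (by linear_combination (p - c) * h0)
  have hminus : p - c ≠ 0 := fun h0 => hsub (by linear_combination (p + c) * h0)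
  field_simp
  ring

theorem weierstrass_ratio_identity_and_solutions_general
    (g₂ c : ℂ) (hc : c ^ 2 = g₂ / 12)
    (U : Set ℂ) (hU : IsOpen U)
    (P : ℂ → ℂ)
    (hP : ∀ x ∈ U, DifferentiableAt ℂ P x)
    (hPdd : ∀ x ∈ U, deriv (deriv P) x = 6 * P x ^ 2 - g₂ / 2)
    (hPc : ∀ x ∈ U, P x ^ 2 ≠ g₂ / 12)
    (hPdd0 : ∀ x ∈ U, deriv (deriv P) x ≠ 0) :
    (∀ x ∈ U, deriv P x / (P x + c) + deriv P x / (P x - c)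
      = deriv (deriv (deriv P)) x / deriv (deriv P) x) ∧
    (∀ x ∈ U, -deriv (deriv (fun _ : ℂ => (1 : ℂ))) x
      + (deriv P x / (P x + c) + deriv P x / (P x - c)) * deriv (fun _ : ℂ => (1 : ℂ)) x = 0) ∧
    (∀ x ∈ U, -deriv (deriv (deriv P)) x
      + (deriv P x / (P x + c) + deriv P x / (P x - c)) * deriv (deriv P) x = 0) := by
  have hP''' : ∀ x ∈ U, deriv (deriv (deriv P)) x = 2 * 6 * P x * deriv P x := fun x hx =>
    deriv_eq_of_eventuallyEq_const_mul_sq_sub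
      (eventually_of_mem (hU.mem_nhds hx) hPdd) (hP x hx)
  have key : ∀ x ∈ U, deriv P x / (P x + c) + deriv P x / (P x - c)
      = deriv (deriv (deriv P)) x / deriv (deriv P) x := by
    intro x hx
    rw [div_add_div_add_sub _ (hc ▸ hPc x hx), hP''' x hx, hPdd x hx, hc,
      ← mul_div_mul_left _ (P x ^ 2 - g₂ / 12) (by norm_num : (6 : ℂ) ≠ 0)]
    ring
  refine ⟨key, fun x _ => by simp, fun x hx => ?_⟩
  rw [key x hx, div_mul_cancel₀ _ (hPdd0 x hx), neg_add_cancel]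

/-- The identity `P'/(P + c) + P'/(P - c) = P'''/P''` with `c² = g₂/12` for a function
satisfying the Weierstrass differential equations, and the consequence that the constant
function `1` and the function `P'` both solve `-f'' + (P'/(P + c) + P'/(P - c)) f' = 0`. -/
theorem weierstrass_ratio_identity_and_solutions
    (g₂ g₃ c : ℂ) (hc : c ^ 2 = g₂ / 12)
    (U : Set ℂ) (hU : IsOpen U)
    (P : ℂ → ℂ)
    (hP : ∀ x ∈ U, DifferentiableAt ℂ P x)
    (hP' : ∀ x ∈ U, DifferentiableAt ℂ (deriv P) x)
    (hP'' : ∀ x ∈ U, DifferentiableAt ℂ (deriv (deriv P)) x)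
    (hPsq : ∀ x ∈ U, (deriv P x) ^ 2 = 4 * P x ^ 3 - g₂ * P x - g₃)
    (hPdd : ∀ x ∈ U, deriv (deriv P) x = 6 * P x ^ 2 - g₂ / 2)
    (hPc : ∀ x ∈ U, P x ^ 2 ≠ g₂ / 12)
    (hPdd0 : ∀ x ∈ U, deriv (deriv P) x ≠ 0) :
    (∀ x ∈ U, deriv P x / (P x + c) + deriv P x / (P x - c)
      = deriv (deriv (deriv P)) x / deriv (deriv P) x) ∧
    (∀ x ∈ U, -deriv (deriv (fun _ : ℂ => (1 : ℂ))) x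
      + (deriv P x / (P x + c) + deriv P x / (P x - c)) * deriv (fun _ : ℂ => (1 : ℂ)) x = 0) ∧
    (∀ x ∈ U, -deriv (deriv (deriv P)) x
      + (deriv P x / (P x + c) + deriv P x / (P x - c)) * deriv (deriv P) x = 0) :=
  weierstrass_ratio_identity_and_solutions_general g₂ c hc U hU P hP hPdd hPc hPdd0
end
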